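/- Let e ∈ ℝ² be a unit vector, let H = {y ∈ ℝ² : ⟨y, e⟩ > 0}, let x ∈ H, and let x* = x − 2⟨x, e⟩ e. Let r > 0 and let A ⊆ H be a Lebesgue measurable set with |A| ≤ π r². Then ∫_A (2π)^{−1} log(‖x* − y‖ / ‖x − y‖) dy ≤ 2 r ⟨x, e⟩. -/

import Mathlib

open MeasureTheory RealInnerProductSpace Real Set Metric
open scoped ENNReal

/-!
Since `x* - y = (x - y) - 2⟨x, e⟩ e`, we have `‖x* - y‖ ≤ ‖x - y‖ + 2⟨x, e⟩`, so `log t ≤ t - 1`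
bounds the Green function by `⟨x, e⟩ / (π ‖x - y‖)`; it is nonnegative on `H` because
`‖x* - y‖² = ‖x - y‖² + 4⟨x, e⟩⟨y, e⟩`. Among sets of area `π r²` the integral of the radially
decreasing kernel `‖x - y‖⁻¹` is largest on the disc `B(x, r)` (bathtub principle), where it
equals `2π r`.
-/

local notation "ℝ²" => EuclideanSpace ℝ (Fin 2)

namespace Real

theorem log_div_nonneg_of_le {a b : ℝ} (hb : 0 ≤ b) (hba : b ≤ a) : 0 ≤ log (a / b) := by
  rcases hb.eq_or_lt with rfl | hb
  · simp
  · exact log_nonneg ((one_le_div hb).2 hba)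

theorem log_div_le_of_le_add {a b t : ℝ} (ha : 0 ≤ a) (hb : 0 ≤ b) (ht : 0 ≤ t)
    (h : a ≤ b + t) : log (a / b) ≤ t / b := by
  rcases hb.eq_or_lt with rfl | hb
  · simp
  rcases ha.eq_or_lt with rfl | ha
  · simpa using div_nonneg ht hb.le
  calc log (a / b) ≤ a / b - 1 := log_le_sub_one_of_pos (by positivity)
    _ ≤ t / b := by rw [div_sub_one hb.ne', div_le_div_iff_of_pos_right hb]; linarith

end Real

section Reflection

variable {F : Type*} [NormedAddCommGroup F] [InnerProductSpace ℝ F] {e x y : F}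

theorem norm_reflect_sub_sq (he : ‖e‖ = 1) :
    ‖x - (2 * ⟪x, e⟫) • e - y‖ ^ 2 = ‖x - y‖ ^ 2 + 4 * ⟪x, e⟫ * ⟪y, e⟫ := by
  rw [show x - (2 * ⟪x, e⟫) • e - y = (x - y) - (2 * ⟪x, e⟫) • e by abel, norm_sub_sq_real,
    inner_smul_right, norm_smul, inner_sub_left, he, Real.norm_eq_abs, mul_one, sq_abs]
  ring

theorem norm_sub_le_norm_reflect_sub (he : ‖e‖ = 1) (hx : 0 ≤ ⟪x, e⟫) (hy : 0 ≤ ⟪y, e⟫) :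
    ‖x - y‖ ≤ ‖x - (2 * ⟪x, e⟫) • e - y‖ := by
  rw [← pow_le_pow_iff_left₀ (norm_nonneg _) (norm_nonneg _) two_ne_zero,
    norm_reflect_sub_sq he]
  nlinarith [mul_nonneg hx hy]

theorem norm_reflect_sub_le (he : ‖e‖ = 1) (hx : 0 ≤ ⟪x, e⟫) :
    ‖x - (2 * ⟪x, e⟫) • e - y‖ ≤ ‖x - y‖ + 2 * ⟪x, e⟫ := by
  calc ‖x - (2 * ⟪x, e⟫) • e - y‖ = ‖(x - y) - (2 * ⟪x, e⟫) • e‖ := by congr 1; abel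
    _ ≤ ‖x - y‖ + ‖(2 * ⟪x, e⟫) • e‖ := norm_sub_le _ _
    _ = ‖x - y‖ + 2 * ⟪x, e⟫ := by rw [norm_smul, he, mul_one, Real.norm_of_nonneg (by positivity)]

theorem log_norm_reflect_sub_div_nonneg (he : ‖e‖ = 1) (hx : 0 ≤ ⟪x, e⟫) (hy : 0 ≤ ⟪y, e⟫) :
    0 ≤ log (‖x - (2 * ⟪x, e⟫) • e - y‖ / ‖x - y‖) :=
  log_div_nonneg_of_le (norm_nonneg _) (norm_sub_le_norm_reflect_sub he hx hy)

theorem log_norm_reflect_sub_div_le (he : ‖e‖ = 1) (hx : 0 ≤ ⟪x, e⟫) :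
    log (‖x - (2 * ⟪x, e⟫) • e - y‖ / ‖x - y‖) ≤ 2 * ⟪x, e⟫ * ‖x - y‖⁻¹ :=
  (log_div_le_of_le_add (norm_nonneg _) (norm_nonneg _) (by positivity)
    (norm_reflect_sub_le he hx)).trans_eq (div_eq_mul_inv _ _)

end Reflection

section Bathtub

variable {α : Type*} [MeasurableSpace α] {μ : Measure α} {A B : Set α}

theorem measure_sdiff_le_measure_sdiff_of_le (hA : MeasurableSet A) (hB : MeasurableSet B)
    (hμ : μ A ≤ μ B) (hB_fin : μ B ≠ ∞) : μ (A \ B) ≤ μ (B \ A) := by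
  have hAB_fin : μ (A ∩ B) ≠ ∞ := measure_ne_top_of_subset inter_subset_right hB_fin
  rwa [← ENNReal.add_le_add_iff_right hAB_fin, measure_sdiff_add_inter A hB, inter_comm,
    measure_sdiff_add_inter B hA]

theorem setIntegral_le_setIntegral_of_measure_le {f : α → ℝ} {c : ℝ} (hc : 0 ≤ c)
    (hA : MeasurableSet A) (hB : MeasurableSet B) (hμ : μ A ≤ μ B) (hB_fin : μ B ≠ ∞)
    (hfA : IntegrableOn f A μ) (hfB : IntegrableOn f B μ)
    (hf_out : ∀ᵐ y ∂μ.restrict (A \ B), f y ≤ c) (hf_in : ∀ᵐ y ∂μ.restrict (B \ A), c ≤ f y) :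
    ∫ y in A, f y ∂μ ≤ ∫ y in B, f y ∂μ := by
  have hAB_fin : μ (A \ B) ≠ ∞ :=
    measure_ne_top_of_subset sdiff_subset (hμ.trans_lt hB_fin.lt_top).ne
  have hBA_fin : μ (B \ A) ≠ ∞ := measure_ne_top_of_subset sdiff_subset hB_fin
  have h_sdiff : ∫ y in A \ B, f y ∂μ ≤ ∫ y in B \ A, f y ∂μ :=
    calc ∫ y in A \ B, f y ∂μ ≤ ∫ _ in A \ B, c ∂μ :=
          setIntegral_mono_ae_restrict (hfA.mono_set sdiff_subset) (integrableOn_const hAB_fin)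
            hf_out
      _ = μ.real (A \ B) * c := by rw [setIntegral_const, smul_eq_mul]
      _ ≤ μ.real (B \ A) * c := mul_le_mul_of_nonneg_right
          (ENNReal.toReal_mono hBA_fin (measure_sdiff_le_measure_sdiff_of_le hA hB hμ hB_fin)) hc
      _ = ∫ _ in B \ A, c ∂μ := by rw [setIntegral_const, smul_eq_mul]
      _ ≤ ∫ y in B \ A, f y ∂μ :=
          setIntegral_mono_ae_restrict (integrableOn_const hBA_fin) (hfB.mono_set sdiff_subset)
            hf_in
  rw [← integral_inter_add_sdiff hB hfA, ← integral_inter_add_sdiff hA hfB, inter_comm]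
  gcongr

end Bathtub

section Plane

theorem smul_indicator_Iio_inv_eq {r s : ℝ} (hs : 0 < s) :
    s ^ (2 - 1) • (Iio r).indicator (·⁻¹) s = (Ioo 0 r).indicator (fun _ => 1) s := by
  by_cases hsr : s < r <;> simp [hsr, hs, hs.ne']

theorem integrable_indicator_Iio_inv_norm (r : ℝ) :
    Integrable (fun z : ℝ² => (Iio r).indicator (·⁻¹) ‖z‖) := by
  rw [integrable_fun_norm_addHaar, finrank_euclideanSpace_fin,
    integrableOn_congr_fun (s := Ioi 0) (fun s hs => smul_indicator_Iio_inv_eq hs)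
      measurableSet_Ioi]
  exact ((integrable_indicator_iff measurableSet_Ioo).2
    (integrableOn_const measure_Ioo_lt_top.ne)).integrableOn

theorem integral_indicator_Iio_inv_norm {r : ℝ} (hr : 0 ≤ r) :
    ∫ z : ℝ², (Iio r).indicator (·⁻¹) ‖z‖ = 2 * π * r := by
  rw [integral_fun_norm_addHaar, finrank_euclideanSpace_fin,
    setIntegral_congr_fun measurableSet_Ioi (fun s hs => smul_indicator_Iio_inv_eq hs),
    setIntegral_indicator measurableSet_Ioo, inter_eq_right.2 Ioo_subset_Ioi_self,
    setIntegral_const, volume_real_Ioo_of_le hr, measureReal_def,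
    EuclideanSpace.volume_ball_fin_two]
  simp [pi_nonneg]
  ring

theorem integrableOn_inv_norm_sub (x : ℝ²) {S : Set ℝ²} (hS : volume S ≠ ∞) :
    IntegrableOn (fun y => ‖x - y‖⁻¹) S := by
  refine Integrable.mono' (g := fun y => (Iio 1).indicator (·⁻¹) ‖x - y‖ + 1)
    (((integrable_indicator_Iio_inv_norm 1).comp_sub_left x).integrableOn.add
      (integrableOn_const hS)) (by fun_prop) (ae_of_all _ fun y => ?_)
  rw [Real.norm_of_nonneg (by positivity)]
  by_cases hy : ‖x - y‖ < 1
  · simp [hy]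
  · simpa [hy] using inv_le_one_of_one_le₀ (not_lt.1 hy)

theorem integral_ball_inv_norm_sub (x : ℝ²) {r : ℝ} (hr : 0 ≤ r) :
    ∫ y in ball x r, ‖x - y‖⁻¹ = 2 * π * r := by
  have h_indicator : (ball x r).indicator (fun y => ‖x - y‖⁻¹) =
      fun y => (Iio r).indicator (·⁻¹) ‖x - y‖ := by
    ext y
    simp only [indicator, mem_ball_iff_norm', mem_Iio]
  rw [← integral_indicator measurableSet_ball, h_indicator,
    integral_sub_left_eq_self (fun z : ℝ² => (Iio r).indicator (·⁻¹) ‖z‖) volume x,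
    integral_indicator_Iio_inv_norm hr]

theorem setIntegral_inv_norm_sub_le (x : ℝ²) {r : ℝ} (hr : 0 < r) {A : Set ℝ²}
    (hA : MeasurableSet A) (hA_vol : volume A ≤ volume (ball x r)) :
    ∫ y in A, ‖x - y‖⁻¹ ≤ 2 * π * r := by
  have hball_fin : volume (ball x r) ≠ ∞ := measure_ball_lt_top.ne
  rw [← integral_ball_inv_norm_sub x hr.le]
  refine setIntegral_le_setIntegral_of_measure_le (inv_nonneg.2 hr.le) hA measurableSet_ball
    hA_vol hball_fin (integrableOn_inv_norm_sub x (ne_top_of_le_ne_top hball_fin hA_vol))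
    (integrableOn_inv_norm_sub x hball_fin) ?_ ?_
  · refine ae_restrict_of_forall_mem (hA.diff measurableSet_ball) fun y hy => ?_
    exact inv_anti₀ hr (not_lt.1 (mt mem_ball_iff_norm'.2 hy.2))
  · filter_upwards [ae_restrict_of_ae (volume.ae_ne x),
      ae_restrict_mem (measurableSet_ball.diff hA)] with y hyx hy
    exact inv_anti₀ (norm_pos_iff.2 (sub_ne_zero.2 (Ne.symm hyx))) (mem_ball_iff_norm'.1 hy.1).le

end Plane

/-- Key potential estimate for the Green function of the half-plane `H ⊆ ℝ²`:
if `A ⊆ H` has measure at most `π r²`, then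
`∫_A (2π)⁻¹ log(‖x*−y‖/‖x−y‖) dy ≤ 2r⟨x,e⟩`. -/
theorem stmt7 (e : EuclideanSpace ℝ (Fin 2)) (he : ‖e‖ = 1)
    (H : Set (EuclideanSpace ℝ (Fin 2))) (hH : H = {y | 0 < ⟪y, e⟫})
    (x : EuclideanSpace ℝ (Fin 2)) (hx : x ∈ H)
    (xstar : EuclideanSpace ℝ (Fin 2)) (hxstar : xstar = x - (2 * ⟪x, e⟫) • e)
    (r : ℝ) (hr : 0 < r)
    (A : Set (EuclideanSpace ℝ (Fin 2))) (hA : MeasurableSet A) (hAH : A ⊆ H)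
    (hAvol : volume A ≤ ENNReal.ofReal (π * r ^ 2)) :
    ∫ y in A, (2 * π)⁻¹ * Real.log (‖xstar - y‖ / ‖x - y‖) ≤ 2 * r * ⟪x, e⟫ := by
  subst hH hxstar
  have hxe : 0 < ⟪x, e⟫ := hx
  have hA_fin : volume A ≠ ∞ := ne_top_of_le_ne_top ENNReal.ofReal_ne_top hAvol
  have hA_ball : volume A ≤ volume (ball x r) := by
    rwa [EuclideanSpace.volume_ball_fin_two, ← ENNReal.ofReal_pow hr.le,
      ← ENNReal.ofReal_mul (by positivity), mul_comm]
  calc ∫ y in A, (2 * π)⁻¹ * log (‖x - (2 * ⟪x, e⟫) • e - y‖ / ‖x - y‖)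
      ≤ ∫ y in A, (2 * π)⁻¹ * (2 * ⟪x, e⟫ * ‖x - y‖⁻¹) := by
        refine integral_mono_of_nonneg ?_
          (((integrableOn_inv_norm_sub x hA_fin).const_mul _).const_mul _) (ae_of_all _ fun y => ?_)
        · exact ae_restrict_of_forall_mem hA fun y hy => mul_nonneg (by positivity)
            (log_norm_reflect_sub_div_nonneg he hxe.le (hAH hy).le)
        · exact mul_le_mul_of_nonneg_left (log_norm_reflect_sub_div_le he hxe.le) (by positivity)
    _ = (2 * π)⁻¹ * (2 * ⟪x, e⟫ * ∫ y in A, ‖x - y‖⁻¹) := by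
        rw [integral_const_mul, integral_const_mul]
    _ ≤ (2 * π)⁻¹ * (2 * ⟪x, e⟫ * (2 * π * r)) := by
        gcongr
        exact setIntegral_inv_norm_sub_le x hr hA hA_ball
    _ = 2 * r * ⟪x, e⟫ := by field_simp
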